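/- Define the 8×8 real matrices J₁ = [[ρ, 0], [0, ρ]], J₂ = [[0, α], [−α, 0]], J₃ = [[0, Ω], [−Ω, 0]], where ρ = [[0, A], [A, 0]], α = [[A, 0], [0, −A]], Ω = [[0, I₂], [−I₂, 0]] are 4×4 matrices and A = [[0, −1], [1, 0]], and let η = [[0, I₄], [I₄, 0]]. For real numbers a₁, a₂, a₃, let 𝔸 = a₁J₁ + a₂J₂ + a₃J₃. If −a₁² + a₂² + a₃² = 1 then 𝔸² = I₈ and 𝔸ᵀ · η · 𝔸 = −η (𝔸 is a generalized almost para-complex structure), while if −a₁² + a₂² + a₃² = −1 then 𝔸² = −I₈ and 𝔸ᵀ · η · 𝔸 = η (𝔸 is a generalized almost complex structure). Thus there is a one-sheeted hyperboloid of generalized almost para-complex structures and a two-sheeted hyperboloid of generalized almost complex structures in the real span of {J₁, J₂, J₃}. -/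
import Mathlib


open Matrix

/-- The 2×2 block `A = [[0,−1],[1,0]]`. -/
def A2 : Matrix (Fin 2) (Fin 2) ℝ := !![0, -1; 1, 0]

/-- The complex structure `ρ = [[0,A],[A,0]]`. -/
def ρm : Matrix (Fin 2 ⊕ Fin 2) (Fin 2 ⊕ Fin 2) ℝ := Matrix.fromBlocks 0 A2 A2 0

/-- The matrix `α = [[A,0],[0,−A]]` of the 2-form `dp∧dq − dx∧dy`. -/
def αm : Matrix (Fin 2 ⊕ Fin 2) (Fin 2 ⊕ Fin 2) ℝ := Matrix.fromBlocks A2 0 0 (-A2)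

/-- The matrix `Ω = [[0,I₂],[−I₂,0]]` of the canonical symplectic form. -/
def Ωm : Matrix (Fin 2 ⊕ Fin 2) (Fin 2 ⊕ Fin 2) ℝ := Matrix.fromBlocks 0 1 (-1) 0

/-- The matrix `η = [[0,I₄],[I₄,0]]` of the natural inner product on `𝕋M`. -/
def ηm : Matrix ((Fin 2 ⊕ Fin 2) ⊕ (Fin 2 ⊕ Fin 2)) ((Fin 2 ⊕ Fin 2) ⊕ (Fin 2 ⊕ Fin 2)) ℝ :=
  Matrix.fromBlocks 0 1 1 0

lemma hA2 : A2 * A2 = -1 := by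
  rw [A2]; norm_num [Matrix.mul_fin_two]
  ext i j; fin_cases i <;> fin_cases j <;> simp

lemma hA2T : A2ᵀ = -A2 := by
  rw [A2]; ext i j; fin_cases i <;> fin_cases j <;> simp

lemma negone {l m : Type*} [Fintype l] [Fintype m] [DecidableEq l] [DecidableEq m] :
    Matrix.fromBlocks (-1 : Matrix l l ℝ) 0 0 (-1 : Matrix m m ℝ) = -1 := by
  have h : (-1 : Matrix (l ⊕ m) (l ⊕ m) ℝ) = -(Matrix.fromBlocks 1 0 0 1) := by
    rw [Matrix.fromBlocks_one]
  rw [h, Matrix.fromBlocks_neg]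
  simp

lemma hρρ : ρm * ρm = -1 := by
  simp [ρm, Matrix.fromBlocks_multiply, hA2, Matrix.fromBlocks_neg, negone]
lemma hαα : αm * αm = -1 := by
  simp [αm, Matrix.fromBlocks_multiply, hA2, Matrix.fromBlocks_neg, negone]
lemma hΩΩ : Ωm * Ωm = -1 := by
  simp [Ωm, Matrix.fromBlocks_multiply, Matrix.fromBlocks_neg, negone]
lemma hρα : ρm * αm = Ωm := by
  simp [ρm, αm, Ωm, Matrix.fromBlocks_multiply, hA2]
lemma hαρ : αm * ρm = -Ωm := by
  simp [ρm, αm, Ωm, Matrix.fromBlocks_multiply, hA2, Matrix.fromBlocks_neg]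
lemma hρΩ : ρm * Ωm = -αm := by
  simp [ρm, αm, Ωm, Matrix.fromBlocks_multiply, Matrix.fromBlocks_neg]
lemma hΩρ : Ωm * ρm = αm := by
  simp [ρm, αm, Ωm, Matrix.fromBlocks_multiply]
lemma hαΩ : αm * Ωm = ρm := by
  simp [ρm, αm, Ωm, Matrix.fromBlocks_multiply]
lemma hΩα : Ωm * αm = -ρm := by
  simp [ρm, αm, Ωm, Matrix.fromBlocks_multiply, Matrix.fromBlocks_neg]
lemma hρT : ρmᵀ = -ρm := by
  simp [ρm, Matrix.fromBlocks_transpose, hA2T, Matrix.fromBlocks_neg]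
lemma hαT : αmᵀ = -αm := by
  simp [αm, Matrix.fromBlocks_transpose, hA2T, Matrix.fromBlocks_neg]
lemma hΩT : Ωmᵀ = -Ωm := by
  simp [Ωm, Matrix.fromBlocks_transpose, Matrix.fromBlocks_neg]

/-- In the real span of `{J₁, J₂, J₃}` (sign parameters `ε₁ = 1`, `ε₂ = ε₃ = −1`)
there is a one-sheeted hyperboloid (`−a₁² + a₂² + a₃² = 1`) of generalized almost
para-complex structures and a two-sheeted hyperboloid (`−a₁² + a₂² + a₃² = −1`) of
generalized almost complex structures. -/
theorem hyperboloids_of_structures (a₁ a₂ a₃ : ℝ)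
    (J₁ J₂ J₃ 𝔸 : Matrix ((Fin 2 ⊕ Fin 2) ⊕ (Fin 2 ⊕ Fin 2)) ((Fin 2 ⊕ Fin 2) ⊕ (Fin 2 ⊕ Fin 2)) ℝ)
    (hJ₁ : J₁ = Matrix.fromBlocks ρm 0 0 ρm)
    (hJ₂ : J₂ = Matrix.fromBlocks 0 αm (-αm) 0)
    (hJ₃ : J₃ = Matrix.fromBlocks 0 Ωm (-Ωm) 0)
    (h𝔸 : 𝔸 = a₁ • J₁ + a₂ • J₂ + a₃ • J₃) :
    (-a₁ ^ 2 + a₂ ^ 2 + a₃ ^ 2 = 1 → 𝔸 * 𝔸 = 1 ∧ 𝔸ᵀ * ηm * 𝔸 = -ηm) ∧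
    (-a₁ ^ 2 + a₂ ^ 2 + a₃ ^ 2 = -1 → 𝔸 * 𝔸 = -1 ∧ 𝔸ᵀ * ηm * 𝔸 = ηm) := by
  have h11 : J₁ * J₁ = -1 := by
    simp [hJ₁, Matrix.fromBlocks_multiply, hρρ, negone]
  have h22 : J₂ * J₂ = 1 := by
    simp [hJ₂, Matrix.fromBlocks_multiply, Matrix.neg_mul, Matrix.mul_neg, hαα,
      Matrix.fromBlocks_one]
  have h33 : J₃ * J₃ = 1 := by
    simp [hJ₃, Matrix.fromBlocks_multiply, Matrix.neg_mul, Matrix.mul_neg, hΩΩ,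
      Matrix.fromBlocks_one]
  have h12 : J₁ * J₂ = J₃ := by
    simp [hJ₁, hJ₂, hJ₃, Matrix.fromBlocks_multiply, Matrix.mul_neg, hρα]
  have h21 : J₂ * J₁ = -J₃ := by
    simp [hJ₁, hJ₂, hJ₃, Matrix.fromBlocks_multiply, Matrix.neg_mul, hαρ,
      Matrix.fromBlocks_neg]
  have h13 : J₁ * J₃ = -J₂ := by
    simp [hJ₁, hJ₂, hJ₃, Matrix.fromBlocks_multiply, Matrix.mul_neg, hρΩ,
      Matrix.fromBlocks_neg]
  have h31 : J₃ * J₁ = J₂ := by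
    simp [hJ₁, hJ₂, hJ₃, Matrix.fromBlocks_multiply, Matrix.neg_mul, hΩρ]
  have h23 : J₂ * J₃ = -J₁ := by
    simp [hJ₁, hJ₂, hJ₃, Matrix.fromBlocks_multiply, Matrix.neg_mul, Matrix.mul_neg, hαΩ,
      Matrix.fromBlocks_neg]
  have h32 : J₃ * J₂ = J₁ := by
    simp [hJ₁, hJ₂, hJ₃, Matrix.fromBlocks_multiply, Matrix.neg_mul, Matrix.mul_neg, hΩα,
      Matrix.fromBlocks_neg]
  have hsq : 𝔸 * 𝔸 = (-a₁ ^ 2 + a₂ ^ 2 + a₃ ^ 2) • 1 := by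
    rw [h𝔸]
    simp only [add_mul, mul_add, smul_mul_assoc, Matrix.mul_smul, smul_smul,
      h11, h22, h33, h12, h21, h13, h31, h23, h32, smul_neg]
    module
  have hT1 : J₁ᵀ = -J₁ := by
    simp [hJ₁, Matrix.fromBlocks_transpose, hρT, Matrix.fromBlocks_neg]
  have hT2 : J₂ᵀ = J₂ := by
    simp [hJ₂, Matrix.fromBlocks_transpose, Matrix.transpose_neg, hαT]
  have hT3 : J₃ᵀ = J₃ := by
    simp [hJ₃, Matrix.fromBlocks_transpose, Matrix.transpose_neg, hΩT]
  have hη1 : J₁ * ηm = ηm * J₁ := by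
    simp [hJ₁, ηm, Matrix.fromBlocks_multiply]
  have hη2 : J₂ * ηm = -(ηm * J₂) := by
    simp [hJ₂, ηm, Matrix.fromBlocks_multiply, Matrix.neg_mul, Matrix.mul_neg,
      Matrix.fromBlocks_neg]
  have hη3 : J₃ * ηm = -(ηm * J₃) := by
    simp [hJ₃, ηm, Matrix.fromBlocks_multiply, Matrix.neg_mul, Matrix.mul_neg,
      Matrix.fromBlocks_neg]
  have key : 𝔸ᵀ * ηm = -(ηm * 𝔸) := by
    rw [h𝔸]
    simp only [Matrix.transpose_add, Matrix.transpose_smul, hT1, hT2, hT3, add_mul, mul_add,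
      smul_mul_assoc, Matrix.neg_mul, hη1, hη2, hη3, Matrix.mul_smul, smul_neg, neg_add_rev,
      neg_neg, mul_smul_comm]
    abel
  have final : 𝔸ᵀ * ηm * 𝔸 = -((-a₁ ^ 2 + a₂ ^ 2 + a₃ ^ 2) • ηm) := by
    rw [key, Matrix.neg_mul, Matrix.mul_assoc, hsq, mul_smul_comm, mul_one]
  constructor
  · intro h
    rw [hsq, h, one_smul, final, h, one_smul]
    exact ⟨rfl, rfl⟩
  · intro h
    rw [hsq, h, final, h]
    constructor
    · simp
    · simp
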